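/- arXiv:1307.7896 — 3 statements merged into one kernel-verified Lean document; each statement's English description precedes it below -/
import Mathlib

section
/- For each sign ε ∈ {+,−}, every integer r, and every polynomial f ∈ F, one has r · Σ_{l,k≥0, l−k=r} d^ε_l c^ε_k f = ∓ Σ_{l,k≥0, n≠0, l−k−n=r} d^ε_l (H(n)/2) c^ε_k f, where the upper sign goes with ε = + and both sums have only finitely many nonzero terms. (This is the coefficientwise form of the identity ∂_z(E^ε_+(z)E^ε_−(z)) = E^ε_+(z)(∓Σ_{n≠0} (H(n)/2) z^{−n−1})E^ε_−(z).) -/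
open MvPolynomial

/-- The semi-infinite wedge space `Λ`: complex vector space with basis `v_{S,T}`
indexed by pairs `(S, T)` of finite subsets of the positive integers.  The basis
vector `v_{S,T}` encodes the semi-infinite wedge product with support
`supp(S,T) = {-s-1/2 : s ∈ S} ∪ {-1/2} ∪ {k+1/2 : k ∈ ℤ_{≥1}, k ∉ T} ⊆ ℤ + 1/2`. -/
abbrev Wedge : Type := (Finset ℕ+ × Finset ℕ+) →₀ ℂ

/-- Image of the basis vector `v_{S,T}` under the operator `A(m)` (for `m ∈ ℤ + 1/2`,
i.e. a rational with denominator `2`; `A(m) := 0` for other rationals).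
`A(m) v_{S,T} = 0` if `m ∈ supp(S,T)` or `m = 1/2`; otherwise
`A(m) v_{S,T} = (m - 1/2) ⬝ (-1)^j ⬝ v_{S',T'}` where `j = #{i ∈ supp(S,T) : i < m}`
and `supp(S',T') = supp(S,T) ∪ {m}`.  Writing `m = n + 1/2` with `n = ⌊m⌋ ∈ ℤ`:
if `n ≥ 1` then `m ∈ supp(S,T)` iff `n ∉ T`, and the new support corresponds to
`(S, T \ {n})` with sign exponent `j = |S| + n - #{t ∈ T : t < n}`;
if `n ≤ -2` then `m = -s - 1/2` with `s = -n-1 ≥ 1`, `m ∈ supp(S,T)` iff `s ∈ S`,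
and the new support corresponds to `(S ∪ {s}, T)` with `j = #{s' ∈ S : s' > s}`;
if `n = 0` (`m = 1/2`) or `n = -1` (`m = -1/2 ∈ supp(S,T)`) the result is `0`. -/
noncomputable def Abasis (m : ℚ) (ST : Finset ℕ+ × Finset ℕ+) : Wedge :=
  if m.den = 2 then
    let n : ℤ := ⌊m⌋
    if hn : 1 ≤ n then
      let k : ℕ+ := ⟨n.toNat, by omega⟩
      if k ∈ ST.2 then
        (((n : ℂ)) * (-1) ^ (ST.1.card + n.toNat - (ST.2.filter (· < k)).card)) •
          Finsupp.single (ST.1, ST.2.erase k) (1 : ℂ)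
      else 0
    else if hn' : n ≤ -2 then
      let s : ℕ+ := ⟨(-n - 1).toNat, by omega⟩
      if s ∈ ST.1 then 0
      else
        (((n : ℂ)) * (-1) ^ ((ST.1.filter (s < ·)).card)) •
          Finsupp.single (insert s ST.1, ST.2) (1 : ℂ)
    else 0
  else 0

/-- Image of the basis vector `v_{S,T}` under the operator `A*(m)` (for `m ∈ ℤ + 1/2`).
`A*(m) v_{S,T} = 0` if `-m ∉ supp(S,T)` or `m = 1/2`; otherwise
`A*(m) v_{S,T} = (m - 1/2) ⬝ (-1)^{j'} ⬝ v_{S'',T''}` where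
`j' = #{i ∈ supp(S,T) : i < -m}` and `supp(S'',T'') = supp(S,T) \ {-m}`.
Writing `m = n + 1/2`, `n = ⌊m⌋`: if `n ≥ 1` then `-m = -n - 1/2 ∈ supp(S,T)` iff
`n ∈ S`, new pair `(S \ {n}, T)`, `j' = #{s' ∈ S : s' > n}`; if `n ≤ -2` then
`-m = k + 1/2` with `k = -n-1 ≥ 1`, `-m ∈ supp(S,T)` iff `k ∉ T`, new pair
`(S, T ∪ {k})`, `j' = |S| + k - #{t ∈ T : t < k}`; otherwise `0`. -/
noncomputable def AstarBasis (m : ℚ) (ST : Finset ℕ+ × Finset ℕ+) : Wedge :=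
  if m.den = 2 then
    let n : ℤ := ⌊m⌋
    if hn : 1 ≤ n then
      let s : ℕ+ := ⟨n.toNat, by omega⟩
      if s ∈ ST.1 then
        (((n : ℂ)) * (-1) ^ ((ST.1.filter (s < ·)).card)) •
          Finsupp.single (ST.1.erase s, ST.2) (1 : ℂ)
      else 0
    else if hn' : n ≤ -2 then
      let k : ℕ+ := ⟨(-n - 1).toNat, by omega⟩
      if k ∈ ST.2 then 0
      else
        (((n : ℂ)) * (-1) ^ (ST.1.card + (-n - 1).toNat - (ST.2.filter (· < k)).card)) •
          Finsupp.single (ST.1, insert k ST.2) (1 : ℂ)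
    else 0
  else 0

/-- The operator `A(m)` on the semi-infinite wedge space `Λ`, extended linearly. -/
noncomputable def Aop (m : ℚ) : Wedge →ₗ[ℂ] Wedge :=
  Finsupp.lsum ℂ fun ST => LinearMap.toSpanSingleton ℂ Wedge (Abasis m ST)

/-- The operator `A*(m)` on the semi-infinite wedge space `Λ`, extended linearly. -/
noncomputable def AstarOp (m : ℚ) : Wedge →ₗ[ℂ] Wedge :=
  Finsupp.lsum ℂ fun ST => LinearMap.toSpanSingleton ℂ Wedge (AstarBasis m ST)

/-- The Fock space `F = ℂ[x_1, x_2, ...]`, a polynomial ring in countably many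
variables indexed by the positive integers. -/
abbrev Fock : Type := MvPolynomial ℕ+ ℂ

/-- Endomorphisms of the Fock space. -/
abbrev EndF : Type := Module.End ℂ Fock

/-- The Heisenberg operators on the Fock space: `H(-n)` is multiplication by `x_n`
and `H(n) = -4n ∂/∂x_n` for `n ≥ 1` (and `0` for `n = 0`, which is never used). -/
noncomputable def HF (n : ℤ) : EndF :=
  if hn : 1 ≤ n then ((-4 : ℂ) * (n : ℂ)) • (pderiv (⟨n.toNat, by omega⟩ : ℕ+)).toLinearMap
  else if hn' : n ≤ -1 then LinearMap.mulLeft ℂ (X (⟨(-n).toNat, by omega⟩ : ℕ+))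
  else 0

/-- `sgn true = -1`, `sgn false = 1`: the sign `∓` attached to the label `ε ∈ {+, -}`
(`ε = +` is `true`), as in `E^±_+(z) = exp(∓ Σ_{n>0} x_n z^n / (2n))`. -/
def sgn (ε : Bool) : ℂ := if ε then -1 else 1

/-- The coefficient of `z^k` in the exponential `exp(g(z)) = Σ_j g(z)^j / j!` of an
operator-valued formal power series `g` (with zero constant term, so that only the
terms `j ≤ k` contribute to the coefficient of `z^k`). -/
noncomputable def expCoeff (g : PowerSeries EndF) (k : ℕ) : EndF :=
  ∑ j ∈ Finset.range (k + 1), ((j.factorial : ℂ))⁻¹ • (PowerSeries.coeff k (g ^ j))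

/-- The series `∓ Σ_{n > 0} x_n z^n / (2n)` (multiplication operators). -/
noncomputable def dSeries (ε : Bool) : PowerSeries EndF :=
  PowerSeries.mk fun n =>
    if hn : 0 < n then sgn ε • (((2 * n : ℂ))⁻¹ • LinearMap.mulLeft ℂ (X (⟨n, hn⟩ : ℕ+)))
    else 0

/-- The series `∓ 2 Σ_{n > 0} (∂/∂x_n) w^n`, where `w` stands for `z^{-1}`. -/
noncomputable def cSeries (ε : Bool) : PowerSeries EndF :=
  PowerSeries.mk fun n =>
    if hn : 0 < n then sgn ε • ((2 : ℂ) • (pderiv (⟨n, hn⟩ : ℕ+)).toLinearMap)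
    else 0

/-- `d^ε_l`, the coefficient of `z^l` in `E^ε_+(z) = exp(∓ Σ_{n>0} x_n z^n/(2n))`. -/
noncomputable def dOp (ε : Bool) (l : ℕ) : EndF := expCoeff (dSeries ε) l

/-- `c^ε_k`, the coefficient of `z^{-k}` in `E^ε_-(z) = exp(∓ 2 Σ_{n>0} (∂/∂x_n) z^{-n})`. -/
noncomputable def cOp (ε : Bool) (k : ℕ) : EndF := expCoeff (cSeries ε) k

/-- The space `V = F ⊗ Λ ⊗ ℂ[ℤα]`, realized as finitely supported functions from
the basis `{v_{S,T} ⊗ e^{pα}}` of `Λ ⊗ ℂ[ℤα]` to the Fock space `F`: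
the index `((S,T), p)` records the basis vector `v_{S,T} ⊗ e^{pα}` and the value
is the `F`-coordinate, so `Finsupp.single ((S,T), p) f` is `f ⊗ v_{S,T} ⊗ e^{pα}`. -/
abbrev VV : Type := ((Finset ℕ+ × Finset ℕ+) × ℤ) →₀ Fock

/-- `emb w p f` is the element `f ⊗ w ⊗ e^{pα}` of `V` for `w ∈ Λ`. -/
noncomputable def emb (w : Wedge) (p : ℤ) (f : Fock) : VV :=
  w.sum fun ST c => Finsupp.single (ST, p) (c • f)

/-- The operator `X(m)` of the representation `π` on `V`:
`X(m)(f ⊗ v_{S,T} ⊗ e^{pα}) = Σ_{l,k ≥ 0} (d^+_l c^+_k f) ⊗ A(m+l-k-p-1/2) v_{S,T} ⊗ e^{(p+1)α}`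
(only finitely many summands are nonzero on each vector). -/
noncomputable def Xop (m : ℤ) : VV → VV := fun u =>
  u.sum fun STp f =>
    ∑ᶠ lk : ℕ × ℕ,
      emb (Abasis ((m : ℚ) + lk.1 - lk.2 - STp.2 - 1/2) STp.1) (STp.2 + 1)
        (dOp true lk.1 (cOp true lk.2 f))

/-- The operator `Y(m)` of the representation `π` on `V`:
`Y(m)(f ⊗ v_{S,T} ⊗ e^{pα}) = Σ_{l,k ≥ 0} (d^-_l c^-_k f) ⊗ A*(m+l-k+p-1/2) v_{S,T} ⊗ e^{(p-1)α}`. -/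
noncomputable def Yop (m : ℤ) : VV → VV := fun u =>
  u.sum fun STp f =>
    ∑ᶠ lk : ℕ × ℕ,
      emb (AstarBasis ((m : ℚ) + lk.1 - lk.2 + STp.2 - 1/2) STp.1) (STp.2 - 1)
        (dOp false lk.1 (cOp false lk.2 f))

/-- The operator `H(m)` of the representation `π` on `V`: for `m ≠ 0` it acts as
`H(m)` on the Fock factor, and `H(0)` acts on `f ⊗ v ⊗ e^{pα}` by the scalar `2p`. -/
noncomputable def HVop (m : ℤ) : VV → VV := fun u =>
  u.sum fun STp f =>
    Finsupp.single STp (if m = 0 then ((2 : ℂ) * (STp.2 : ℂ)) • f else HF m f)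

/-- The weight of a monomial `x₁^{a₁} x₂^{a₂} ⋯`, namely `Σ n aₙ`. -/
def wtMon (μ : ℕ+ →₀ ℕ) : ℚ := μ.sum fun n a => (n : ℚ) * a

/-- The degree of the basis vector `v_{S,T}` of `Λ`: `Σ_{s∈S} s + Σ_{t∈T} t`. -/
def degWedge (ST : Finset ℕ+ × Finset ℕ+) : ℚ :=
  (∑ s ∈ ST.1, (s : ℚ)) + ∑ t ∈ ST.2, (t : ℚ)

/-- The degree operator `d` of the representation `π` on `V`:
`d (f ⊗ v_{S,T} ⊗ e^{pα}) = (-wt(f) - deg(v_{S,T}) - p²/2) ⬝ (f ⊗ v_{S,T} ⊗ e^{pα})`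
on monomials `f`. -/
noncomputable def dV : VV → VV := fun u =>
  u.sum fun STp f =>
    Finsupp.single STp
      (∑ μ ∈ f.support,
        monomial μ
          ((((-(wtMon μ) - degWedge STp.1 - (STp.2 : ℚ) ^ 2 / 2 : ℚ) : ℂ)) * coeff μ f))

/-- The vacuum space `Ω = Λ ⊗ ℂ[ℤα]`, with basis `{v_{S,T} ⊗ e^{pα}}`. -/
abbrev Vac : Type := ((Finset ℕ+ × Finset ℕ+) × ℤ) →₀ ℂ

/-- `embVac w p` is the element `w ⊗ e^{pα}` of `Ω` for `w ∈ Λ`. -/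
noncomputable def embVac (w : Wedge) (p : ℤ) : Vac :=
  w.sum fun ST c => Finsupp.single (ST, p) c

/-- The operator `Z⁺(m)` on `Ω`: `Z⁺(m)(v ⊗ e^{pα}) = A(m-p-1/2)v ⊗ e^{(p+1)α}`. -/
noncomputable def Zplus (m : ℤ) : Vac → Vac := fun u =>
  u.sum fun STp c => c • embVac (Abasis ((m : ℚ) - STp.2 - 1/2) STp.1) (STp.2 + 1)

/-- The operator `Z⁻(m)` on `Ω`: `Z⁻(m)(v ⊗ e^{pα}) = A*(m+p-1/2)v ⊗ e^{(p-1)α}`. -/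
noncomputable def Zminus (m : ℤ) : Vac → Vac := fun u =>
  u.sum fun STp c => c • embVac (AstarBasis ((m : ℚ) + STp.2 - 1/2) STp.1) (STp.2 - 1)

/-- Extension to `V = F ⊗ Λ ⊗ ℂ[ℤα]` of an operator `e` on the Fock factor,
i.e. `e ⊗ 1 ⊗ 1`. -/
noncomputable def extF (e : EndF) : VV → VV := fun u =>
  u.sum fun STp f => Finsupp.single STp (e f)

/-- The operator `Z⁺(m) = Σ_{a,b≥0} (d⁻_a ⊗ 1 ⊗ 1) ∘ X(m+a-b) ∘ (c⁻_b ⊗ 1 ⊗ 1)` on `V`,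
the coefficient of `z^{-m}` in `E⁻₊(z) X(z) E⁻₋(z)` (only finitely many summands act
nontrivially on each vector). -/
noncomputable def ZplusV (m : ℤ) : VV → VV := fun u =>
  ∑ᶠ ab : ℕ × ℕ,
    extF (dOp false ab.1) (Xop (m + (ab.1 : ℤ) - (ab.2 : ℤ)) (extF (cOp false ab.2) u))

/-- The operator `Z⁻(m) = Σ_{a,b≥0} (d⁺_a ⊗ 1 ⊗ 1) ∘ Y(m+a-b) ∘ (c⁺_b ⊗ 1 ⊗ 1)` on `V`,
the coefficient of `z^{-m}` in `E⁺₊(z) Y(z) E⁺₋(z)`. -/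
noncomputable def ZminusV (m : ℤ) : VV → VV := fun u =>
  ∑ᶠ ab : ℕ × ℕ,
    extF (dOp true ab.1) (Yop (m + (ab.1 : ℤ) - (ab.2 : ℤ)) (extF (cOp true ab.2) u))

/-- `Ncount j` is the number of quadruples `(a, S, T, p)` with `a : ℤ_{≥1} → ℤ_{≥0}`
finitely supported, `S, T` finite subsets of the positive integers and `p ∈ ℤ`,
satisfying `2 Σ_{n≥1} n a(n) + 2 (Σ_{s∈S} s + Σ_{t∈T} t) + p² = j`; this is the
dimension of the eigenspace of `d` with eigenvalue `-j/2` on `V`. -/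
noncomputable def Ncount (j : ℕ) : ℕ :=
  Nat.card {q : (ℕ+ →₀ ℕ) × Finset ℕ+ × Finset ℕ+ × ℤ //
    2 * (q.1.sum fun n a => (n : ℤ) * a) +
      2 * ((∑ s ∈ q.2.1, (s : ℤ)) + ∑ t ∈ q.2.2.1, (t : ℤ)) + q.2.2.2 ^ 2 = (j : ℤ)}


/-!
For an operator-valued power series `g` with pairwise commuting coefficients and no constant
term, the Euler operator `θ = z d/dz` satisfies `θ (g ^ j) = j • θ g * g ^ (j - 1)`, so the
coefficients `e_k` of `exp g` obey `k e_k = ∑_{n ≥ 1} n g_n e_{k-n}`. For `E^ε_+` this reads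
`l d_l = ∓ ∑_m (H(-m)/2) d_{l-m}`, with `H(-m)` commuting with every `d`, and for `E^ε_-`
(in the variable `z⁻¹`) `k c_k = ± ∑_m (H(m)/2) c_{k-m}`. Hence `(l - k) d_l c_k f` is `∓` the
sum of the `d_{l-m} (H(-m)/2) c_k f` and the `d_l (H(m)/2) c_{k-m} f`; summing over `l - k = r`
and reindexing gives the identity. All sums are finite because `c_k`, and `H(m) c_k` for
`m > 0`, lower the weight `∑ n a_n` of a monomial `∏ x_n ^ a_n` by `k`, resp. `m + k`.
-/

open PowerSeries Finset

namespace PowerSeries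

variable {R : Type*} [Semiring R]

theorem commute_of_commute_coeff {φ ψ : R⟦X⟧} (h : ∀ a b, Commute (coeff a φ) (coeff b ψ)) :
    Commute φ ψ := by
  ext n
  rw [coeff_mul, coeff_mul, ← Nat.sum_antidiagonal_swap]
  exact sum_congr rfl fun p _ => (h p.2 p.1).eq

theorem coeff_pow_eq_zero_of_lt {φ : R⟦X⟧} (hφ : constantCoeff φ = 0) {m j : ℕ} (hm : m < j) :
    coeff m (φ ^ j) = 0 := by
  obtain ⟨ψ, rfl⟩ := X_dvd_iff.2 hφ
  rw [(commute_X ψ).symm.mul_pow]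
  exact X_pow_dvd_iff.1 (dvd_mul_right _ _) m hm

/-- The Euler operator `z d/dz`, used instead of `PowerSeries.derivative`, which needs
commutative coefficients. -/
noncomputable def eulerOp (φ : R⟦X⟧) : R⟦X⟧ := mk fun n => n • coeff n φ

@[simp]
theorem coeff_eulerOp (φ : R⟦X⟧) (n : ℕ) : coeff n (eulerOp φ) = n • coeff n φ :=
  coeff_mk _ _

theorem eulerOp_one : eulerOp (1 : R⟦X⟧) = 0 := by
  ext n
  rcases eq_or_ne n 0 with rfl | hn <;> simp [coeff_one, *]

theorem eulerOp_mul (φ ψ : R⟦X⟧) : eulerOp (φ * ψ) = eulerOp φ * ψ + φ * eulerOp ψ := by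
  ext n
  simp only [coeff_eulerOp, map_add, coeff_mul, smul_sum, ← sum_add_distrib]
  refine sum_congr rfl fun p hp => ?_
  rw [← HasAntidiagonal.mem_antidiagonal.1 hp, add_smul, smul_mul_assoc, mul_smul_comm]

theorem eulerOp_pow_succ {φ : R⟦X⟧} (h : Commute φ (eulerOp φ)) (j : ℕ) :
    eulerOp (φ ^ (j + 1)) = (j + 1) • (eulerOp φ * φ ^ j) := by
  induction j with
  | zero => simp
  | succ j ih =>
    rw [pow_succ, eulerOp_mul, ih, smul_mul_assoc, mul_assoc, ← pow_succ,
      (h.pow_left (j + 1)).eq, ← succ_nsmul]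

end PowerSeries

theorem MvPolynomial.pderiv_pderiv_comm {σ R : Type*} [CommSemiring R] (i j : σ)
    (p : MvPolynomial σ R) : pderiv i (pderiv j p) = pderiv j (pderiv i p) := by
  classical
  induction p using MvPolynomial.induction_on with
  | C a => simp
  | add p q hp hq => simp [hp, hq]
  | mul_X p k ih =>
    simp only [Derivation.leibniz, map_add, smul_eq_mul, ih, pderiv_X, Pi.single_apply]
    split_ifs <;> simp <;> ring

theorem MvPolynomial.commute_pderiv {σ R : Type*} [CommSemiring R] (i j : σ) :
    Commute ((pderiv i).toLinearMap : Module.End R (MvPolynomial σ R)) (pderiv j).toLinearMap :=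
  LinearMap.ext fun p => pderiv_pderiv_comm i j p

theorem LinearMap.commute_mulLeft_mulLeft {R A : Type*} [CommSemiring R] [CommSemiring A]
    [Algebra R A] (a b : A) : Commute (LinearMap.mulLeft R a) (LinearMap.mulLeft R b) :=
  LinearMap.ext fun p => by
    simp only [Module.End.mul_apply, LinearMap.mulLeft_apply, mul_left_comm a b]

section Finsum

variable {M : Type*} [AddCommMonoid M] {P : ℕ → Prop} [DecidablePred P] {N : ℕ}

theorem finsum_mem_setOf_eq_sum_filter {g : ℕ → M} (hg : ∀ k, N < k → g k = 0) :
    ∑ᶠ k ∈ {k | P k}, g k = ∑ k ∈ (range (N + 1)).filter P, g k := by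
  refine finsum_mem_eq_sum_of_subset g (fun k ⟨hk, hgk⟩ => ?_) fun k hk => ?_
  · have : k ≤ N := by_contra fun h => hgk (hg k (by omega))
    simp only [coe_filter, mem_range]
    exact ⟨by omega, hk⟩
  · exact (mem_filter.1 hk).2

theorem finsum_mem_setOf_eq_sum_sum {I : ℕ → Finset ℕ} {g : ℕ × ℕ → M}
    (hg : ∀ k, N < k → ∀ m ∈ I k, g (k, m) = 0) :
    ∑ᶠ x ∈ {x : ℕ × ℕ | P x.1 ∧ x.2 ∈ I x.1}, g x =
      ∑ k ∈ (range (N + 1)).filter P, ∑ m ∈ I k, g (k, m) := by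
  set K := (range (N + 1)).filter P
  have hmem : ∀ x, x ∈ K.biUnion (fun k => (I k).image (Prod.mk k)) ↔ x.1 ∈ K ∧ x.2 ∈ I x.1 := by
    rintro ⟨k, m⟩
    simp
  rw [← sum_finset_product _ K I hmem]
  refine finsum_mem_eq_sum_of_subset g (fun x ⟨hx, hgx⟩ => ?_) fun x hx => ?_
  · have : x.1 ≤ N := by_contra fun h => hgx (hg x.1 (by omega) x.2 hx.2)
    simp only [mem_coe, hmem, K, mem_filter, mem_range]
    exact ⟨⟨by omega, hx.1⟩, hx.2⟩
  · simp only [mem_coe, hmem, K, mem_filter] at hx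
    exact ⟨hx.1.2, hx.2⟩

end Finsum

theorem expCoeff_eq_sum_range {g : PowerSeries EndF} (h0 : constantCoeff g = 0) {i K : ℕ}
    (hi : i < K) : expCoeff g i = ∑ j ∈ range K, (j.factorial : ℂ)⁻¹ • coeff i (g ^ j) := by
  refine sum_subset (range_subset_range.2 hi) fun j _ hj => ?_
  rw [coeff_pow_eq_zero_of_lt h0 (by simpa using hj), smul_zero]

theorem inv_factorial_smul_coeff_eulerOp_pow_succ {g : PowerSeries EndF}
    (hθ : Commute g (eulerOp g)) (j k : ℕ) :
    ((j + 1).factorial : ℂ)⁻¹ • coeff k (eulerOp (g ^ (j + 1))) =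
      (j.factorial : ℂ)⁻¹ • coeff k (eulerOp g * g ^ j) := by
  rw [eulerOp_pow_succ hθ, map_nsmul, ← Nat.cast_smul_eq_nsmul ℂ, smul_smul, Nat.factorial_succ]
  congr 1
  push_cast
  field_simp

theorem smul_expCoeff {g : PowerSeries EndF} (h0 : constantCoeff g = 0)
    (hc : ∀ a b, Commute (coeff a g) (coeff b g)) (k : ℕ) :
    (k : ℂ) • expCoeff g k = ∑ n ∈ Icc 1 k, (n : ℂ) • (coeff n g * expCoeff g (k - n)) := by
  have hθ : Commute g (eulerOp g) :=
    commute_of_commute_coeff fun a b => by rw [coeff_eulerOp]; exact (hc a b).smul_right b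
  have hterm : ∀ p ∈ antidiagonal k,
      ∑ j ∈ range k, (j.factorial : ℂ)⁻¹ • (p.1 • coeff p.1 g * coeff p.2 (g ^ j)) =
        (p.1 : ℂ) • (coeff p.1 g * expCoeff g p.2) := by
    rintro ⟨n, i⟩ hp
    rw [HasAntidiagonal.mem_antidiagonal] at hp
    rcases Nat.eq_zero_or_pos n with rfl | hn
    · simp
    rw [expCoeff_eq_sum_range h0 (by omega : i < k), mul_sum, smul_sum]
    refine sum_congr rfl fun j _ => ?_
    rw [smul_mul_assoc, mul_smul_comm, smul_comm, Nat.cast_smul_eq_nsmul]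
  calc (k : ℂ) • expCoeff g k
      = ∑ j ∈ range (k + 1), (j.factorial : ℂ)⁻¹ • coeff k (eulerOp (g ^ j)) := by
        simp only [expCoeff, smul_sum, coeff_eulerOp, smul_comm (k : ℂ), Nat.cast_smul_eq_nsmul]
    _ = ∑ j ∈ range k, (j.factorial : ℂ)⁻¹ • coeff k (eulerOp g * g ^ j) := by
        rw [sum_range_succ', pow_zero, eulerOp_one, map_zero, smul_zero, add_zero]
        exact sum_congr rfl fun j _ => inv_factorial_smul_coeff_eulerOp_pow_succ hθ j k
    _ = ∑ p ∈ antidiagonal k, (p.1 : ℂ) • (coeff p.1 g * expCoeff g p.2) := by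
        simp only [PowerSeries.coeff_mul, coeff_eulerOp, smul_sum]
        rw [sum_comm]
        exact sum_congr rfl hterm
    _ = _ := by
        rw [Nat.sum_antidiagonal_eq_sum_range_succ_mk]
        refine (sum_subset (fun n hn => ?_) fun n hn hn' => ?_).symm
        · simp only [mem_Icc, mem_range] at hn ⊢
          omega
        · obtain rfl : n = 0 := by simp only [mem_Icc, mem_range] at hn hn'; omega
          simp

theorem commute_expCoeff {c : EndF} {g : PowerSeries EndF} (h : ∀ n, Commute c (coeff n g))
    (k : ℕ) : Commute c (expCoeff g k) := by
  have hC : Commute (PowerSeries.C c) g := commute_of_commute_coeff fun a b => by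
    rw [PowerSeries.coeff_C]
    split_ifs
    exacts [h b, Commute.zero_left _]
  refine Commute.sum_right _ _ _ fun j _ => Commute.smul_right ?_ _
  simpa [Commute, SemiconjBy, PowerSeries.coeff_C_mul, PowerSeries.coeff_mul_C] using
    congrArg (coeff k) (hC.pow_right j).eq

section Series

variable (ε : Bool)

theorem coeff_dSeries (n : ℕ) : coeff n (dSeries ε) =
    if hn : 0 < n then sgn ε • (((2 * n : ℂ))⁻¹ • LinearMap.mulLeft ℂ (X (σ := ℕ+) ⟨n, hn⟩))
    else 0 := by
  rw [dSeries, PowerSeries.coeff_mk]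
  rfl

theorem coeff_cSeries (n : ℕ) : coeff n (cSeries ε) =
    if hn : 0 < n then sgn ε • ((2 : ℂ) • ((pderiv (σ := ℕ+) ⟨n, hn⟩).toLinearMap : EndF))
    else 0 := by
  rw [cSeries, PowerSeries.coeff_mk]
  rfl

theorem constantCoeff_dSeries : constantCoeff (dSeries ε) = 0 := by
  rw [← PowerSeries.coeff_zero_eq_constantCoeff_apply, coeff_dSeries, dif_neg (lt_irrefl 0)]

theorem constantCoeff_cSeries : constantCoeff (cSeries ε) = 0 := by
  rw [← PowerSeries.coeff_zero_eq_constantCoeff_apply, coeff_cSeries, dif_neg (lt_irrefl 0)]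

theorem commute_mulLeft_coeff_dSeries (p : Fock) (n : ℕ) :
    Commute (LinearMap.mulLeft ℂ p) (coeff n (dSeries ε)) := by
  rw [coeff_dSeries]
  split_ifs
  exacts [(((LinearMap.commute_mulLeft_mulLeft _ _).smul_right _).smul_right _),
    Commute.zero_right _]

theorem commute_coeff_dSeries (a b : ℕ) :
    Commute (coeff a (dSeries ε)) (coeff b (dSeries ε)) := by
  rw [coeff_dSeries ε a]
  split_ifs
  exacts [((commute_mulLeft_coeff_dSeries ε _ b).smul_left _).smul_left _, Commute.zero_left _]

theorem commute_coeff_cSeries (a b : ℕ) :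
    Commute (coeff a (cSeries ε)) (coeff b (cSeries ε)) := by
  rw [coeff_cSeries, coeff_cSeries]
  split_ifs
  exacts [((((commute_pderiv _ _).smul_left _).smul_left _).smul_right _).smul_right _,
    Commute.zero_right _, Commute.zero_left _, Commute.zero_left _]

end Series

theorem HF_neg_natCast {n : ℕ} (hn : 0 < n) :
    HF (-(n : ℤ)) = LinearMap.mulLeft ℂ (X (σ := ℕ+) ⟨n, hn⟩) := by
  rw [HF, dif_neg (by omega), dif_pos (by omega)]
  simp only [neg_neg, Int.toNat_natCast]

theorem HF_natCast {n : ℕ} (hn : 0 < n) :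
    HF n = ((-4 : ℂ) * n) • ((pderiv (σ := ℕ+) ⟨n, hn⟩).toLinearMap : EndF) := by
  rw [HF, dif_pos (by omega)]
  simp only [Int.toNat_natCast, Int.cast_natCast]
  rfl

section Recursions

variable (ε : Bool)

theorem natCast_smul_coeff_dSeries {n : ℕ} (hn : 0 < n) :
    (n : ℂ) • coeff n (dSeries ε) = sgn ε • ((2 : ℂ)⁻¹ • HF (-(n : ℤ))) := by
  rw [coeff_dSeries, dif_pos hn, HF_neg_natCast hn]
  simp only [smul_smul]
  congr 1
  have : (n : ℂ) ≠ 0 := Nat.cast_ne_zero.2 hn.ne'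
  field_simp

theorem natCast_smul_coeff_cSeries {n : ℕ} (hn : 0 < n) :
    (n : ℂ) • coeff n (cSeries ε) = -sgn ε • ((2 : ℂ)⁻¹ • HF n) := by
  rw [coeff_cSeries, dif_pos hn, HF_natCast hn]
  simp only [smul_smul]
  congr 1
  ring

theorem smul_dOp (l : ℕ) :
    (l : ℂ) • dOp ε l = ∑ m ∈ Icc 1 l, sgn ε • ((2 : ℂ)⁻¹ • HF (-(m : ℤ)) * dOp ε (l - m)) := by
  rw [dOp, smul_expCoeff (constantCoeff_dSeries ε) (commute_coeff_dSeries ε)]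
  refine sum_congr rfl fun m hm => ?_
  rw [← smul_mul_assoc, natCast_smul_coeff_dSeries ε (mem_Icc.1 hm).1, smul_mul_assoc]
  rfl

theorem smul_cOp (k : ℕ) :
    (k : ℂ) • cOp ε k = ∑ m ∈ Icc 1 k, -sgn ε • ((2 : ℂ)⁻¹ • HF m * cOp ε (k - m)) := by
  rw [cOp, smul_expCoeff (constantCoeff_cSeries ε) (commute_coeff_cSeries ε)]
  refine sum_congr rfl fun m hm => ?_
  rw [← smul_mul_assoc, natCast_smul_coeff_cSeries ε (mem_Icc.1 hm).1, smul_mul_assoc]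
  rfl

theorem commute_HF_neg_dOp {m : ℕ} (hm : 0 < m) (l : ℕ) :
    Commute ((2 : ℂ)⁻¹ • HF (-(m : ℤ))) (dOp ε l) := by
  rw [HF_neg_natCast hm]
  exact (commute_expCoeff (commute_mulLeft_coeff_dSeries ε _) l).smul_left _

theorem smul_dOp_cOp (l k : ℕ) (f : Fock) :
    ((l : ℂ) - k) • dOp ε l (cOp ε k f) =
      sgn ε • (∑ m ∈ Icc 1 l, dOp ε (l - m) (((2 : ℂ)⁻¹ • HF (-(m : ℤ))) (cOp ε k f)) +
        ∑ m ∈ Icc 1 k, dOp ε l (((2 : ℂ)⁻¹ • HF m) (cOp ε (k - m) f))) := by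
  have hd : (l : ℂ) • dOp ε l (cOp ε k f) =
      sgn ε • ∑ m ∈ Icc 1 l, dOp ε (l - m) (((2 : ℂ)⁻¹ • HF (-(m : ℤ))) (cOp ε k f)) := by
    rw [← LinearMap.smul_apply, smul_dOp, LinearMap.sum_apply, smul_sum]
    refine sum_congr rfl fun m hm => ?_
    rw [LinearMap.smul_apply, (commute_HF_neg_dOp ε (mem_Icc.1 hm).1 _).eq]
    rfl
  have hc : (k : ℂ) • dOp ε l (cOp ε k f) =
      -sgn ε • ∑ m ∈ Icc 1 k, dOp ε l (((2 : ℂ)⁻¹ • HF m) (cOp ε (k - m) f)) := by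
    rw [← map_smul, ← LinearMap.smul_apply, smul_cOp, LinearMap.sum_apply, map_sum,
      smul_sum]
    refine sum_congr rfl fun m _ => ?_
    rw [LinearMap.smul_apply, map_smul]
    rfl
  rw [sub_smul, hd, hc, smul_add, neg_smul, sub_neg_eq_add]

end Recursions

noncomputable def monomialWeight : (ℕ+ →₀ ℕ) →+ ℕ := Finsupp.weight fun n : ℕ+ => (n : ℕ)

noncomputable def weightLE (w : ℤ) : Submodule ℂ Fock :=
  restrictSupport ℂ {μ | (monomialWeight μ : ℤ) ≤ w}

-- Weights are taken in `ℤ` so that lowering the weight below `0` forces the image to vanish.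
noncomputable def weightLowering (s : ℕ) : Submodule ℂ EndF where
  carrier := {T | ∀ w : ℤ, ∀ p ∈ weightLE (w + s), T p ∈ weightLE w}
  add_mem' hT hT' w p hp := add_mem (hT w p hp) (hT' w p hp)
  zero_mem' _ _ _ := zero_mem _
  smul_mem' c _ hT w p hp := Submodule.smul_mem _ c (hT w p hp)

theorem exists_mem_weightLE (p : Fock) : ∃ N : ℕ, p ∈ weightLE N :=
  ⟨p.support.sup monomialWeight, (mem_restrictSupport_iff ℂ).2 fun _ hμ => by
    simpa using le_sup (f := monomialWeight) hμ⟩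

theorem eq_zero_of_mem_weightLE {w : ℤ} (hw : w < 0) {p : Fock} (hp : p ∈ weightLE w) :
    p = 0 := by
  rw [← support_eq_empty, eq_empty_iff_forall_notMem]
  intro μ hμ
  have : (monomialWeight μ : ℤ) ≤ w := hp hμ
  omega

theorem one_mem_weightLowering : 1 ∈ weightLowering 0 := fun w p hp => by simpa using hp

theorem mul_mem_weightLowering {T T' : EndF} {s s' : ℕ} (hT : T ∈ weightLowering s)
    (hT' : T' ∈ weightLowering s') : T * T' ∈ weightLowering (s + s') := fun w p hp =>
  hT w _ (hT' (w + s) p (by rwa [add_assoc, ← Nat.cast_add]))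

theorem pderiv_mem_weightLowering (n : ℕ+) :
    ((pderiv n).toLinearMap : EndF) ∈ weightLowering n := by
  intro w p hp
  rw [p.as_sum, map_sum]
  refine Submodule.sum_mem _ fun μ hμ => ?_
  change pderiv n (monomial μ (coeff μ p)) ∈ _
  rw [pderiv_monomial, weightLE, monomial_mem_restrictSupport]
  by_cases h : μ n = 0
  · simp [h]
  have hsplit : μ - Finsupp.single n 1 + Finsupp.single n 1 = μ :=
    tsub_add_cancel_of_le (Finsupp.single_le_iff.2 (Nat.one_le_iff_ne_zero.2 h))
  have hμw : (monomialWeight μ : ℤ) ≤ w + n := hp hμ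
  rw [← hsplit, map_add, monomialWeight, Finsupp.weight_single, one_smul] at hμw
  left
  simp only [Set.mem_ofPred_eq, monomialWeight]
  push_cast at hμw
  omega

theorem apply_eq_zero_of_mem_weightLowering {T : EndF} {s N : ℕ} (hT : T ∈ weightLowering s)
    {p : Fock} (hp : p ∈ weightLE N) (hN : N < s) : T p = 0 :=
  eq_zero_of_mem_weightLE (w := N - s) (by omega) (hT _ p (by simpa using hp))

section Lowering

variable (ε : Bool)

theorem coeff_cSeries_mem_weightLowering (n : ℕ) : coeff n (cSeries ε) ∈ weightLowering n := by
  rw [coeff_cSeries]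
  split_ifs with hn
  · exact Submodule.smul_mem _ _ (Submodule.smul_mem _ _ (pderiv_mem_weightLowering ⟨n, hn⟩))
  · exact zero_mem _

theorem coeff_cSeries_pow_mem_weightLowering (j k : ℕ) :
    coeff k (cSeries ε ^ j) ∈ weightLowering k := by
  induction j generalizing k with
  | zero =>
    rw [pow_zero, PowerSeries.coeff_one]
    split_ifs with hk
    exacts [hk ▸ one_mem_weightLowering, zero_mem _]
  | succ j ih =>
    rw [pow_succ', PowerSeries.coeff_mul]
    refine Submodule.sum_mem _ fun p hp => ?_
    rw [← HasAntidiagonal.mem_antidiagonal.1 hp]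
    exact mul_mem_weightLowering (coeff_cSeries_mem_weightLowering ε p.1) (ih p.2)

theorem cOp_mem_weightLowering (k : ℕ) : cOp ε k ∈ weightLowering k :=
  Submodule.sum_mem _ fun j _ =>
    Submodule.smul_mem _ _ (coeff_cSeries_pow_mem_weightLowering ε j k)

theorem HF_natCast_mem_weightLowering {n : ℕ} (hn : 0 < n) : HF n ∈ weightLowering n := by
  rw [HF_natCast hn]
  exact Submodule.smul_mem _ _ (pderiv_mem_weightLowering ⟨n, hn⟩)

theorem cOp_apply_eq_zero {N k : ℕ} {f : Fock} (hf : f ∈ weightLE N) (hk : N < k) :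
    cOp ε k f = 0 :=
  apply_eq_zero_of_mem_weightLowering (cOp_mem_weightLowering ε k) hf hk

theorem HF_cOp_apply_eq_zero {N k : ℕ} {n : ℤ} {f : Fock} (hf : f ∈ weightLE N) (hn : 0 < n)
    (hnk : N < n + k) : ((2 : ℂ)⁻¹ • HF n) (cOp ε k f) = 0 := by
  lift n to ℕ using hn.le
  have hT : (2 : ℂ)⁻¹ • HF n * cOp ε k ∈ weightLowering (n + k) := by
    rw [smul_mul_assoc]
    exact Submodule.smul_mem _ _ (mul_mem_weightLowering
      (HF_natCast_mem_weightLowering (by omega)) (cOp_mem_weightLowering ε k))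
  rw [← Module.End.mul_apply]
  exact apply_eq_zero_of_mem_weightLowering hT hf (by omega)

end Lowering

section Reindexing

variable (ε : Bool) (r : ℤ) {N : ℕ} {f : Fock}

theorem finsum_dOp_cOp_eq_sum (hf : f ∈ weightLE N) :
    ∑ᶠ p ∈ {p : ℕ × ℕ | (p.1 : ℤ) - (p.2 : ℤ) = r}, dOp ε p.1 (cOp ε p.2 f) =
      ∑ k ∈ (range (N + 1)).filter (fun k : ℕ => 0 ≤ r + k),
        dOp ε (r + k).toNat (cOp ε k f) := by
  refine (finsum_mem_eq_of_bijOn (fun k : ℕ => ((r + k).toNat, k)) ⟨?_, ?_, ?_⟩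
    fun _ _ => rfl).symm.trans
      (finsum_mem_setOf_eq_sum_filter fun k hk => by rw [cOp_apply_eq_zero ε hf hk, map_zero])
  · intro k hk
    simp only [Set.mem_ofPred_eq] at hk ⊢
    omega
  · intro a _ b _ hab
    exact (Prod.ext_iff.1 hab).2
  · rintro ⟨l, k⟩ hlk
    simp only [Set.mem_ofPred_eq] at hlk
    exact ⟨k, by simp only [Set.mem_ofPred_eq]; omega, Prod.ext (by simp only; omega) rfl⟩

theorem finsum_dOp_HF_neg_cOp_eq_sum (hf : f ∈ weightLE N) :
    ∑ᶠ q ∈ {q : ℕ × ℤ × ℕ | q.2.1 < 0 ∧ (q.1 : ℤ) - (q.2.2 : ℤ) - q.2.1 = r},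
        dOp ε q.1 (((2 : ℂ)⁻¹ • HF q.2.1) (cOp ε q.2.2 f)) =
      ∑ k ∈ (range (N + 1)).filter (fun k : ℕ => 0 ≤ r + k),
        ∑ m ∈ Icc 1 (r + k).toNat,
          dOp ε ((r + k).toNat - m) (((2 : ℂ)⁻¹ • HF (-(m : ℤ))) (cOp ε k f)) := by
  refine (finsum_mem_eq_of_bijOn (fun x : ℕ × ℕ => ((r + x.1).toNat - x.2, -(x.2 : ℤ), x.1))
    ⟨?_, ?_, ?_⟩ fun _ _ => rfl).symm.trans (finsum_mem_setOf_eq_sum_sum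
      (I := fun k => Icc 1 (r + k).toNat)
      fun k hk _ _ => by rw [cOp_apply_eq_zero ε hf hk, map_zero, map_zero])
  · rintro ⟨k, m⟩ hkm
    simp only [Set.mem_ofPred_eq, mem_Icc] at hkm ⊢
    omega
  · rintro ⟨a, m⟩ - ⟨b, m'⟩ - h
    simp only [Prod.mk.injEq] at h
    exact Prod.ext h.2.2 (by omega)
  · rintro ⟨l, n, k⟩ hq
    simp only [Set.mem_ofPred_eq] at hq
    refine ⟨(k, (-n).toNat), ?_, ?_⟩
    · simp only [Set.mem_ofPred_eq, mem_Icc]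
      omega
    · simp only [Prod.mk.injEq, and_true]
      omega

theorem finsum_dOp_HF_pos_cOp_eq_sum (hf : f ∈ weightLE N) :
    ∑ᶠ q ∈ {q : ℕ × ℤ × ℕ | 0 < q.2.1 ∧ (q.1 : ℤ) - (q.2.2 : ℤ) - q.2.1 = r},
        dOp ε q.1 (((2 : ℂ)⁻¹ • HF q.2.1) (cOp ε q.2.2 f)) =
      ∑ k ∈ (range (N + 1)).filter (fun k : ℕ => 0 ≤ r + k),
        ∑ m ∈ Icc 1 k, dOp ε (r + k).toNat (((2 : ℂ)⁻¹ • HF m) (cOp ε (k - m) f)) := by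
  refine (finsum_mem_eq_of_bijOn (fun x : ℕ × ℕ => ((r + x.1).toNat, (x.2 : ℤ), x.1 - x.2))
    ⟨?_, ?_, ?_⟩ fun _ _ => rfl).symm.trans (finsum_mem_setOf_eq_sum_sum
      (I := fun k => Icc 1 k) fun k hk m hm => by
        rw [mem_Icc] at hm
        dsimp only
        rw [HF_cOp_apply_eq_zero ε hf (by omega) (by omega), map_zero])
  · rintro ⟨k, m⟩ hkm
    simp only [Set.mem_ofPred_eq, mem_Icc] at hkm ⊢
    omega
  · rintro ⟨a, m⟩ ha ⟨b, m'⟩ hb h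
    simp only [Set.mem_ofPred_eq, mem_Icc, Prod.mk.injEq] at ha hb h
    exact Prod.ext (by omega) (by omega)
  · rintro ⟨l, n, k⟩ hq
    simp only [Set.mem_ofPred_eq] at hq
    refine ⟨(k + n.toNat, n.toNat), ?_, ?_⟩
    · simp only [Set.mem_ofPred_eq, mem_Icc]
      omega
    · simp only [Prod.mk.injEq]
      omega

end Reindexing

section Assembly

variable (ε : Bool) (r : ℤ) {N : ℕ} {f : Fock}

theorem finite_dOp_cOp_ne_zero (hf : f ∈ weightLE N) :
    {p : ℕ × ℕ | (p.1 : ℤ) - (p.2 : ℤ) = r ∧ dOp ε p.1 (cOp ε p.2 f) ≠ 0}.Finite := by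
  refine ((Set.finite_Iic (r + N).toNat).prod (Set.finite_Iic N)).subset ?_
  rintro ⟨l, k⟩ ⟨hlk, hne⟩
  have hk : k ≤ N := by_contra fun h => hne (by rw [cOp_apply_eq_zero ε hf (by omega), map_zero])
  simp only [Set.mem_prod, Set.mem_Iic]
  omega

theorem finite_dOp_HF_cOp_ne_zero (hf : f ∈ weightLE N) :
    {q : ℕ × ℤ × ℕ | q.2.1 ≠ 0 ∧ (q.1 : ℤ) - (q.2.2 : ℤ) - q.2.1 = r ∧
      dOp ε q.1 (((2 : ℂ)⁻¹ • HF q.2.1) (cOp ε q.2.2 f)) ≠ 0}.Finite := by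
  refine ((Set.finite_Iic (r + N).toNat).prod
    ((Set.finite_Icc (-(r + N)) N).prod (Set.finite_Iic N))).subset ?_
  rintro ⟨l, n, k⟩ ⟨hn, hr, hne⟩
  dsimp only at hn hr hne
  have hk : k ≤ N := by_contra fun h => hne (by
    rw [cOp_apply_eq_zero ε hf (by omega), map_zero, map_zero])
  have hnk : 0 < n → n + k ≤ N := fun hpos => by_contra fun h => hne (by
    rw [HF_cOp_apply_eq_zero ε hf hpos (by omega), map_zero])
  simp only [Set.mem_prod, Set.mem_Iic, Set.mem_Icc]
  omega

theorem finsum_dOp_HF_cOp_eq_sum (hf : f ∈ weightLE N) :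
    ∑ᶠ q ∈ {q : ℕ × ℤ × ℕ | q.2.1 ≠ 0 ∧ (q.1 : ℤ) - (q.2.2 : ℤ) - q.2.1 = r},
        dOp ε q.1 (((2 : ℂ)⁻¹ • HF q.2.1) (cOp ε q.2.2 f)) =
      ∑ k ∈ (range (N + 1)).filter (fun k : ℕ => 0 ≤ r + k),
        (∑ m ∈ Icc 1 (r + k).toNat,
          dOp ε ((r + k).toNat - m) (((2 : ℂ)⁻¹ • HF (-(m : ℤ))) (cOp ε k f)) +
        ∑ m ∈ Icc 1 k, dOp ε (r + k).toNat (((2 : ℂ)⁻¹ • HF m) (cOp ε (k - m) f))) := by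
  have hfin := finite_dOp_HF_cOp_ne_zero ε r hf
  simp only [ne_iff_lt_or_gt, or_and_right, Set.ofPred_or]
  rw [finsum_mem_union' ?_ (hfin.subset ?_) (hfin.subset ?_), finsum_dOp_HF_neg_cOp_eq_sum ε r hf,
    finsum_dOp_HF_pos_cOp_eq_sum ε r hf, sum_add_distrib]
  · exact Set.disjoint_left.2 fun q hq hq' => by simp only [Set.mem_ofPred_eq] at hq hq'; omega
  all_goals
    rintro q ⟨hq, hne⟩
    simp only [Set.mem_ofPred_eq] at hq
    exact ⟨by omega, hq.2, hne⟩

theorem smul_finsum_dOp_cOp (hf : f ∈ weightLE N) :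
    (r : ℂ) • (∑ᶠ p ∈ {p : ℕ × ℕ | (p.1 : ℤ) - (p.2 : ℤ) = r}, dOp ε p.1 (cOp ε p.2 f)) =
      sgn ε • ∑ᶠ q ∈ {q : ℕ × ℤ × ℕ | q.2.1 ≠ 0 ∧ (q.1 : ℤ) - (q.2.2 : ℤ) - q.2.1 = r},
        dOp ε q.1 (((2 : ℂ)⁻¹ • HF q.2.1) (cOp ε q.2.2 f)) := by
  rw [finsum_dOp_cOp_eq_sum ε r hf, finsum_dOp_HF_cOp_eq_sum ε r hf, smul_sum, smul_sum]
  refine sum_congr rfl fun k hk => ?_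
  have hr : (r : ℂ) = ((r + k).toNat : ℕ) - (k : ℂ) := by
    rw [mem_filter] at hk
    rw [← Int.cast_natCast, Int.toNat_of_nonneg hk.2]
    push_cast
    ring
  rw [hr, smul_dOp_cOp]

end Assembly

theorem statement5 (ε : Bool) (r : ℤ) (f : Fock) :
    {p : ℕ × ℕ | (p.1 : ℤ) - (p.2 : ℤ) = r ∧ dOp ε p.1 (cOp ε p.2 f) ≠ 0}.Finite ∧
    {q : ℕ × ℤ × ℕ | q.2.1 ≠ 0 ∧ (q.1 : ℤ) - (q.2.2 : ℤ) - q.2.1 = r ∧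
        dOp ε q.1 (((2 : ℂ)⁻¹ • HF q.2.1) (cOp ε q.2.2 f)) ≠ 0}.Finite ∧
    (r : ℂ) • (∑ᶠ p ∈ {p : ℕ × ℕ | (p.1 : ℤ) - (p.2 : ℤ) = r},
        dOp ε p.1 (cOp ε p.2 f)) =
      sgn ε • ∑ᶠ q ∈ {q : ℕ × ℤ × ℕ | q.2.1 ≠ 0 ∧ (q.1 : ℤ) - (q.2.2 : ℤ) - q.2.1 = r},
        dOp ε q.1 (((2 : ℂ)⁻¹ • HF q.2.1) (cOp ε q.2.2 f)) := by
  obtain ⟨N, hf⟩ := exists_mem_weightLE f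
  exact ⟨finite_dOp_cOp_ne_zero ε r hf, finite_dOp_HF_cOp_ne_zero ε r hf,
    smul_finsum_dOp_cOp ε r hf⟩
end

section
/- The vector v₀ = 1 ⊗ v_{∅,∅} ⊗ e^{0·α} ∈ V satisfies X(0)v₀ = 0, Y(1)v₀ = 0, Y(0)v₀ = 0, H(0)v₀ = 0, and d·v₀ = 0; hence v₀ is a highest weight vector for the representation π of affine sl₂ at the critical level c = −2, of weight −2Λ₀ (the Chevalley generators act by e₀v₀ = Y(1)v₀ = 0, e₁v₀ = X(0)v₀ = 0, h₀v₀ = (−H(0)+c)v₀ = −2v₀, h₁v₀ = H(0)v₀ = 0). -/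
/-! The operators `c^±_k`, `k > 0`, are differential operators and kill the constant `1`, so on
`v₀` only the summands with `k = 0` of `X(m)` and `Y(m)` remain; for `m ≥ 0` these involve
`A(n + 1/2)`, `A*(n + 1/2)` with `n ≥ -1`, which annihilate `v_{∅,∅}`. The vector `v₀` has
weight `0`, degree `0` and charge `p = 0`, so `H(0)` and `d` vanish on it. -/

open MvPolynomial

lemma emb_fock_zero (w : Wedge) (p : ℤ) : emb w p 0 = 0 := by
  simp [emb]

lemma emb_wedge_zero (p : ℤ) (f : Fock) : emb 0 p f = 0 := by
  simp [emb]

/-- Each coefficient of `g ^ j`, `j ≥ 1`, ends with a coefficient of `g`. -/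
lemma expCoeff_apply_eq_zero {g : PowerSeries EndF} {f : Fock}
    (hg : ∀ n, (PowerSeries.coeff n g : EndF) f = 0) {k : ℕ} (hk : k ≠ 0) : expCoeff g k f = 0 := by
  have hpow : ∀ j, j ≠ 0 → (PowerSeries.coeff k (g ^ j) : EndF) f = 0 := by
    rintro (_ | j) hj
    · exact absurd rfl hj
    rw [pow_succ, PowerSeries.coeff_mul, LinearMap.coe_sum, Finset.sum_apply]
    exact Finset.sum_eq_zero fun ab _ => by rw [Module.End.mul_apply, hg, map_zero]
  rw [expCoeff, LinearMap.coe_sum, Finset.sum_apply]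
  refine Finset.sum_eq_zero fun j _ => ?_
  rcases eq_or_ne j 0 with rfl | hj
  · simp [PowerSeries.coeff_one, hk]
  · rw [LinearMap.smul_apply, hpow j hj, smul_zero]

lemma cOp_apply_one (ε : Bool) {k : ℕ} (hk : k ≠ 0) : cOp ε k 1 = 0 := by
  refine expCoeff_apply_eq_zero (fun n => ?_) hk
  rw [cSeries, PowerSeries.coeff_mk]
  split_ifs
  · show sgn ε • (2 : ℂ) • pderiv (R := ℂ) _ (1 : Fock) = 0
    simp
  · rfl

/-- `supp(∅, ∅) = {-1/2, 3/2, 5/2, …}` already contains every `m ≥ -1/2` except `1/2`. -/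
lemma Abasis_empty (m : ℚ) (hm : -1 ≤ ⌊m⌋) : Abasis m (∅, ∅) = 0 := by
  unfold Abasis
  simp only []
  split_ifs <;>
    first | rfl | (exfalso; omega) | exact absurd ‹_ ∈ (∅ : Finset ℕ+)› (Finset.notMem_empty _)

/-- For `m ≥ -1/2`, `-m ∈ supp(∅, ∅)` only when `m = 1/2`. -/
lemma AstarBasis_empty (m : ℚ) (hm : -1 ≤ ⌊m⌋) : AstarBasis m (∅, ∅) = 0 := by
  unfold AstarBasis
  simp only []
  split_ifs <;>
    first | rfl | (exfalso; omega) | exact absurd ‹_ ∈ (∅ : Finset ℕ+)› (Finset.notMem_empty _)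

lemma finsum_emb_one_eq_zero (ε : Bool) (B : ℕ × ℕ → Wedge) (q : ℤ)
    (hB : ∀ l, B (l, 0) = 0) :
    ∑ᶠ lk : ℕ × ℕ, emb (B lk) q (dOp ε lk.1 (cOp ε lk.2 1)) = 0 := by
  refine finsum_eq_zero_of_forall_eq_zero fun ⟨l, k⟩ => ?_
  rcases eq_or_ne k 0 with rfl | hk
  · rw [hB, emb_wedge_zero]
  · rw [cOp_apply_one _ hk, map_zero, emb_fock_zero]

lemma neg_one_le_floor_add_sub_half (m : ℤ) (hm : 0 ≤ m) (l : ℕ) :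
    -1 ≤ ⌊(m : ℚ) + l - 1 / 2⌋ := by
  have hm' : (0 : ℚ) ≤ m := by exact_mod_cast hm
  rw [Int.le_floor]
  push_cast
  linarith [(Nat.cast_nonneg l : (0 : ℚ) ≤ l)]

lemma Xop_vacuum (m : ℤ) (hm : 0 ≤ m) : Xop m (Finsupp.single ((∅, ∅), 0) 1) = 0 := by
  unfold Xop
  rw [Finsupp.sum_single_index]
  · refine finsum_emb_one_eq_zero _ _ _ fun l => Abasis_empty _ ?_
    simpa using neg_one_le_floor_add_sub_half m hm l
  · simp [emb_fock_zero]

lemma Yop_vacuum (m : ℤ) (hm : 0 ≤ m) : Yop m (Finsupp.single ((∅, ∅), 0) 1) = 0 := by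
  unfold Yop
  rw [Finsupp.sum_single_index]
  · refine finsum_emb_one_eq_zero _ _ _ fun l => AstarBasis_empty _ ?_
    simpa using neg_one_le_floor_add_sub_half m hm l
  · simp [emb_fock_zero]

lemma HVop_zero_single (ST : Finset ℕ+ × Finset ℕ+) (f : Fock) :
    HVop 0 (Finsupp.single (ST, 0) f) = 0 := by
  simp [HVop]

lemma dV_single_one (STp : (Finset ℕ+ × Finset ℕ+) × ℤ) :
    dV (Finsupp.single STp 1) =
      Finsupp.single STp (C (((-degWedge STp.1 - (STp.2 : ℚ) ^ 2 / 2 : ℚ)) : ℂ)) := by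
  rw [dV, Finsupp.sum_single_index (by simp), support_one]
  simp [wtMon]

theorem statement11 :
    ∀ v0 : VV, v0 = Finsupp.single ((∅, ∅), 0) 1 →
      Xop 0 v0 = 0 ∧ Yop 1 v0 = 0 ∧ Yop 0 v0 = 0 ∧ HVop 0 v0 = 0 ∧ dV v0 = 0 ∧
      -(HVop 0 v0) + (-2 : ℂ) • v0 = (-2 : ℂ) • v0 := by
  rintro v0 rfl
  have hH := HVop_zero_single (∅, ∅) 1
  refine ⟨Xop_vacuum 0 le_rfl, Yop_vacuum 1 zero_le_one, Yop_vacuum 0 le_rfl, hH, ?_, ?_⟩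
  · simp [dV_single_one, degWedge]
  · rw [hH, neg_zero, zero_add]
end

section
/- For all m, n ∈ ℤ and every basis vector w = v_{S,T} ⊗ e^{pα} of Ω, all but finitely many terms of the sums Σ_{k≥0} Z⁺(m−k)Z⁺(n+k)w and Σ_{k≥0} Z⁺(n−k)Z⁺(m+k)w vanish, and the two sums are equal. (This is the componentwise form of the generalized commutator relation Z⁺(z)Z⁺(w)(1−w/z)^{−1} − Z⁺(w)Z⁺(z)(1−z/w)^{−1} = 0 of the Z-algebra representation π_Ω.) -/
open MvPolynomial

/-! The operators `A(x)`, `x ∈ ℤ + 1/2`, anticommute: up to scalars they are fermionic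
creation operators, and `A(x)² = 0`. Put `c = m + n - 2p - 1` and
`g(t) = A(c - t - 1/2) A(t - 1/2) v_{S,T}`. The `k`-th term of the first sum is
`g(n - p + k) ⊗ e^{(p+2)α}`, that of the second is `g(m - p + k) ⊗ e^{(p+2)α}`, so both sums
are tails of `Σ_t g(t)`. Now `g(t) = 0` for large `t` (`A(t - 1/2) v_{S,T} = 0` once
`t - 1 > max T`), and `g(c - t) = -g(t)`; since `(n - p) + (m - p) = c + 1`, the finitely many
terms by which the two tails differ cancel in pairs `t ↔ c - t`. -/

open Finset Finsupp

section AntisymmetricSums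

variable {M : Type*} [AddCommGroup M] {g : ℤ → M} {c N : ℤ}

lemma sum_range_eq_zero_of_antisymm [IsAddTorsionFree M] (hg : ∀ t, g (c - t) = -g t)
    {a : ℤ} {d : ℕ} (had : 2 * a + d = c + 1) : ∑ k ∈ range d, g (a + k) = 0 := by
  refine self_eq_neg.1 ?_
  calc ∑ k ∈ range d, g (a + k) = ∑ k ∈ range d, g (a + (d - 1 - k : ℕ)) :=
        (sum_range_reflect _ d).symm
    _ = ∑ k ∈ range d, g (c - (a + k)) := sum_congr rfl fun k hk => by
        rw [mem_range] at hk; congr 1; omega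
    _ = -∑ k ∈ range d, g (a + k) := by simp only [hg, sum_neg_distrib]

lemma support_nat_add_subset_range (hN : ∀ t, N ≤ t → g t = 0) {a : ℤ} {K : ℕ}
    (hK : N ≤ a + K) : Function.support (fun k : ℕ => g (a + k)) ⊆ range K := by
  intro k hk
  by_contra hkK
  rw [coe_range, Set.mem_Iio, not_lt] at hkK
  exact hk (hN _ (by omega))

lemma finite_support_nat_add (hN : ∀ t, N ≤ t → g t = 0) (a : ℤ) :
    (Function.support fun k : ℕ => g (a + k)).Finite :=
  (finite_toSet _).subset (support_nat_add_subset_range hN (K := (N - a).toNat) (by omega))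

lemma finsum_nat_add_eq_of_antisymm [IsAddTorsionFree M] (hg : ∀ t, g (c - t) = -g t)
    (hN : ∀ t, N ≤ t → g t = 0) {a b : ℤ} (hab : a + b = c + 1) :
    ∑ᶠ k : ℕ, g (a + k) = ∑ᶠ k : ℕ, g (b + k) := by
  wlog hle : a ≤ b generalizing a b
  · exact (this (by omega) (by omega)).symm
  obtain ⟨d, rfl⟩ : ∃ d : ℕ, b = a + d := ⟨(b - a).toNat, by omega⟩
  set K := (N - a).toNat
  rw [finsum_eq_sum_of_support_subset _ (support_nat_add_subset_range hN (K := d + K) (by omega)),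
    finsum_eq_sum_of_support_subset _ (support_nat_add_subset_range hN (K := K) (by omega)),
    sum_range_add, sum_range_eq_zero_of_antisymm hg (by omega), zero_add]
  push_cast
  simp only [add_assoc]

end AntisymmetricSums

lemma mul_neg_one_pow_swap {R : Type*} [CommRing R] (a b : R) {α β γ δ : ℕ}
    (h : Odd (α + β + γ + δ)) :
    (a * (-1) ^ α) * (b * (-1) ^ β) = -((b * (-1) ^ γ) * (a * (-1) ^ δ)) := by
  rw [show (a * (-1) ^ α) * (b * (-1) ^ β) = a * b * (-1) ^ (α + β) by ring,
    show (b * (-1) ^ γ) * (a * (-1) ^ δ) = a * b * (-1) ^ (γ + δ) by ring]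
  rw [Nat.odd_iff] at h
  rcases Nat.even_or_odd (γ + δ) with he | ho
  · rw [he.neg_one_pow, (Nat.odd_iff.2 (by rw [Nat.even_iff] at he; omega)).neg_one_pow]; ring
  · rw [ho.neg_one_pow, (Nat.even_iff.2 (by rw [Nat.odd_iff] at ho; omega)).neg_one_pow]; ring

-- the sign exponent of `Abasis` subtracts this count in ℕ; the bound makes that subtraction exact
lemma card_filter_lt_lt (T : Finset ℕ+) (k : ℕ+) : #{t ∈ T | t < k} < k := by
  have h := card_le_card
    (fun t ht => mem_Ico.2 ⟨one_le, (mem_filter.1 ht).2⟩ : {t ∈ T | t < k} ⊆ Ico 1 k)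
  rw [PNat.card_Ico, PNat.one_coe] at h
  have := k.pos
  omega

lemma Int.eq_pnat_add_one_or_eq_neg_pnat {t : ℤ} (ht : ¬(t = 0 ∨ t = 1)) :
    (∃ k : ℕ+, t = k + 1) ∨ ∃ s : ℕ+, t = -s := by
  rcases le_or_gt t 0 with h | h
  · exact .inr ⟨⟨(-t).toNat, by omega⟩, by simp; omega⟩
  · exact .inl ⟨⟨(t - 1).toNat, by omega⟩, by simp; omega⟩

noncomputable def Ahalf (t : ℤ) : Wedge →ₗ[ℂ] Wedge := Aop ((t : ℚ) - 1 / 2)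

lemma Ahalf_single (t : ℤ) (ST : Finset ℕ+ × Finset ℕ+) (c : ℂ) :
    Ahalf t (single ST c) = c • Abasis ((t : ℚ) - 1 / 2) ST := by
  simp [Ahalf, Aop]

lemma den_intCast_sub_half (t : ℤ) : ((t : ℚ) - 1 / 2).den = 2 := by
  rw [Rat.intCast_sub_den]; norm_num

lemma floor_intCast_sub_half (t : ℤ) : ⌊(t : ℚ) - 1 / 2⌋ = t - 1 := by
  rw [Int.floor_eq_iff]; push_cast; constructor <;> linarith

lemma Abasis_of_floor_eq_pos {m : ℚ} (hm : m.den = 2) {k : ℕ+} (hk : ⌊m⌋ = k)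
    (S T : Finset ℕ+) :
    Abasis m (S, T) = if k ∈ T then
      ((k : ℂ) * (-1) ^ (#S + k - #{t ∈ T | t < k})) • single (S, T.erase k) 1 else 0 := by
  have hk' : ∀ h, (⟨⌊m⌋.toNat, h⟩ : ℕ+) = k := fun h => PNat.eq (by simp [hk])
  dsimp only [Abasis]
  rw [if_pos hm]
  simp only [hk']
  simp [hk]

lemma Abasis_of_floor_eq_neg {m : ℚ} (hm : m.den = 2) {s : ℕ+} (hs : ⌊m⌋ = -s - 1)
    (S T : Finset ℕ+) :
    Abasis m (S, T) = if s ∈ S then 0 else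
      ((-s - 1 : ℂ) * (-1) ^ #{x ∈ S | s < x}) • single (insert s S, T) 1 := by
  have hs' : ∀ h, (⟨(-⌊m⌋ - 1).toNat, h⟩ : ℕ+) = s := fun h => PNat.eq (by simp [hs])
  dsimp only [Abasis]
  rw [if_pos hm]
  simp only [hs']
  have hs1 : ¬ (1 : ℤ) < -s := by have := s.pos; omega
  simp [hs, hs1]

lemma Ahalf_eq_zero {t : ℤ} (ht : t = 0 ∨ t = 1) : Ahalf t = 0 := by
  refine Finsupp.lhom_ext fun ST c => ?_
  rw [Ahalf_single, Abasis, if_pos (den_intCast_sub_half t)]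
  simp only [floor_intCast_sub_half]
  rcases ht with rfl | rfl <;> simp

section
variable {S T : Finset ℕ+}

lemma Ahalf_pos_of_mem {k : ℕ+} (hk : k ∈ T) :
    Ahalf (k + 1) (single (S, T) 1) =
      ((k : ℂ) * (-1) ^ (#S + k - #{t ∈ T | t < k})) • single (S, T.erase k) 1 := by
  rw [Ahalf_single, one_smul, Abasis_of_floor_eq_pos (den_intCast_sub_half _)
    (by rw [floor_intCast_sub_half, add_sub_cancel_right]), if_pos hk]

lemma Ahalf_pos_of_not_mem {k : ℕ+} (hk : k ∉ T) : Ahalf (k + 1) (single (S, T) 1) = 0 := by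
  rw [Ahalf_single, one_smul, Abasis_of_floor_eq_pos (den_intCast_sub_half _)
    (by rw [floor_intCast_sub_half, add_sub_cancel_right]), if_neg hk]

lemma Ahalf_neg_of_mem {s : ℕ+} (hs : s ∈ S) : Ahalf (-s) (single (S, T) 1) = 0 := by
  rw [Ahalf_single, one_smul, Abasis_of_floor_eq_neg (den_intCast_sub_half _)
    (floor_intCast_sub_half _), if_pos hs]

lemma Ahalf_neg_of_not_mem {s : ℕ+} (hs : s ∉ S) :
    Ahalf (-s) (single (S, T) 1) =
      ((-s - 1 : ℂ) * (-1) ^ #{x ∈ S | s < x}) • single (insert s S, T) 1 := by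
  rw [Ahalf_single, one_smul, Abasis_of_floor_eq_neg (den_intCast_sub_half _)
    (floor_intCast_sub_half _), if_neg hs]

lemma Ahalf_pos_comm_pos {k k' : ℕ+} (hlt : k < k') :
    Ahalf (k' + 1) (Ahalf (k + 1) (single (S, T) 1)) =
      -Ahalf (k + 1) (Ahalf (k' + 1) (single (S, T) 1)) := by
  by_cases hk : k ∈ T
  · by_cases hk' : k' ∈ T
    · rw [Ahalf_pos_of_mem hk, map_smul, Ahalf_pos_of_mem (mem_erase.2 ⟨hlt.ne', hk'⟩),
        Ahalf_pos_of_mem hk', map_smul, Ahalf_pos_of_mem (mem_erase.2 ⟨hlt.ne, hk⟩),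
        smul_smul, smul_smul, erase_right_comm, ← neg_smul, filter_erase, filter_erase,
        card_erase_of_mem (mem_filter.2 ⟨hk, hlt⟩),
        erase_eq_of_notMem (s := {t ∈ T | t < k}) fun h => lt_asymm hlt (mem_filter.1 h).2]
      congr 1
      have := card_filter_lt_lt T k
      have := card_filter_lt_lt T k'
      have : 0 < #{t ∈ T | t < k'} := card_pos.2 ⟨k, mem_filter.2 ⟨hk, hlt⟩⟩
      exact mul_neg_one_pow_swap _ _ (Nat.odd_iff.2 (by omega))
    · rw [Ahalf_pos_of_mem hk, map_smul, Ahalf_pos_of_not_mem fun h => hk' (mem_of_mem_erase h),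
        Ahalf_pos_of_not_mem hk', map_zero, smul_zero, neg_zero]
  · rw [Ahalf_pos_of_not_mem hk, map_zero]
    by_cases hk' : k' ∈ T
    · rw [Ahalf_pos_of_mem hk', map_smul, Ahalf_pos_of_not_mem fun h => hk (mem_of_mem_erase h),
        smul_zero, neg_zero]
    · rw [Ahalf_pos_of_not_mem hk', map_zero, neg_zero]

lemma Ahalf_pos_comm_neg (k s : ℕ+) :
    Ahalf (k + 1) (Ahalf (-s) (single (S, T) 1)) =
      -Ahalf (-s) (Ahalf (k + 1) (single (S, T) 1)) := by
  by_cases hs : s ∈ S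
  · rw [Ahalf_neg_of_mem hs, map_zero]
    by_cases hk : k ∈ T
    · rw [Ahalf_pos_of_mem hk, map_smul, Ahalf_neg_of_mem hs, smul_zero, neg_zero]
    · rw [Ahalf_pos_of_not_mem hk, map_zero, neg_zero]
  · by_cases hk : k ∈ T
    · rw [Ahalf_neg_of_not_mem hs, map_smul, Ahalf_pos_of_mem hk, Ahalf_pos_of_mem hk, map_smul,
        Ahalf_neg_of_not_mem hs, smul_smul, smul_smul, ← neg_smul, card_insert_of_notMem hs]
      congr 1
      have := card_filter_lt_lt T k
      exact mul_neg_one_pow_swap _ _ (Nat.odd_iff.2 (by omega))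
    · rw [Ahalf_neg_of_not_mem hs, map_smul, Ahalf_pos_of_not_mem hk, Ahalf_pos_of_not_mem hk,
        map_zero, smul_zero, neg_zero]

lemma Ahalf_neg_comm_neg {s s' : ℕ+} (hlt : s' < s) :
    Ahalf (-s') (Ahalf (-s) (single (S, T) 1)) =
      -Ahalf (-s) (Ahalf (-s') (single (S, T) 1)) := by
  by_cases hs : s ∈ S
  · rw [Ahalf_neg_of_mem hs, map_zero]
    by_cases hs' : s' ∈ S
    · rw [Ahalf_neg_of_mem hs', map_zero, neg_zero]
    · rw [Ahalf_neg_of_not_mem hs', map_smul, Ahalf_neg_of_mem (mem_insert_of_mem hs),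
        smul_zero, neg_zero]
  · by_cases hs' : s' ∈ S
    · rw [Ahalf_neg_of_not_mem hs, map_smul, Ahalf_neg_of_mem (mem_insert_of_mem hs'),
        Ahalf_neg_of_mem hs', map_zero, smul_zero, neg_zero]
    · rw [Ahalf_neg_of_not_mem hs, map_smul,
        Ahalf_neg_of_not_mem (mem_insert.not.2 (not_or.2 ⟨hlt.ne, hs'⟩)),
        Ahalf_neg_of_not_mem hs', map_smul,
        Ahalf_neg_of_not_mem (mem_insert.not.2 (not_or.2 ⟨hlt.ne', hs⟩)),
        smul_smul, smul_smul, insert_comm, ← neg_smul, filter_insert, filter_insert,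
        if_pos hlt, if_neg (lt_asymm hlt), card_insert_of_notMem fun h => hs (mem_filter.1 h).1]
      congr 1
      exact mul_neg_one_pow_swap _ _ (Nat.odd_iff.2 (by omega))

lemma Ahalf_Ahalf_self_single (t : ℤ) : Ahalf t (Ahalf t (single (S, T) 1)) = 0 := by
  by_cases ht : t = 0 ∨ t = 1
  · simp [Ahalf_eq_zero ht]
  obtain ⟨k, rfl⟩ | ⟨s, rfl⟩ := Int.eq_pnat_add_one_or_eq_neg_pnat ht
  · by_cases hk : k ∈ T
    · rw [Ahalf_pos_of_mem hk, map_smul, Ahalf_pos_of_not_mem (notMem_erase k T), smul_zero]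
    · rw [Ahalf_pos_of_not_mem hk, map_zero]
  · by_cases hs : s ∈ S
    · rw [Ahalf_neg_of_mem hs, map_zero]
    · rw [Ahalf_neg_of_not_mem hs, map_smul, Ahalf_neg_of_mem (mem_insert_self s S), smul_zero]

lemma Ahalf_anticomm_single (u t : ℤ) :
    Ahalf u (Ahalf t (single (S, T) 1)) = -Ahalf t (Ahalf u (single (S, T) 1)) := by
  rcases eq_or_ne u t with rfl | hne
  · rw [Ahalf_Ahalf_self_single, neg_zero]
  wlog hlt : t < u generalizing u t
  · rw [this t u hne.symm (by omega), neg_neg]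
  by_cases ht : t = 0 ∨ t = 1
  · simp [Ahalf_eq_zero ht]
  by_cases hu : u = 0 ∨ u = 1
  · simp [Ahalf_eq_zero hu]
  obtain ⟨k, rfl⟩ | ⟨s, rfl⟩ := Int.eq_pnat_add_one_or_eq_neg_pnat ht <;>
    obtain ⟨k', rfl⟩ | ⟨s', rfl⟩ := Int.eq_pnat_add_one_or_eq_neg_pnat hu
  · exact Ahalf_pos_comm_pos (by rw [← PNat.coe_lt_coe]; omega)
  · omega
  · exact Ahalf_pos_comm_neg k' s
  · exact Ahalf_neg_comm_neg (by rw [← PNat.coe_lt_coe]; omega)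

end

lemma Ahalf_anticomm (u t : ℤ) (w : Wedge) : Ahalf u (Ahalf t w) = -Ahalf t (Ahalf u w) := by
  induction w using Finsupp.induction_linear with
  | zero => simp
  | add w w' hw hw' => simp only [map_add, hw, hw', neg_add]
  | single ST c =>
    obtain ⟨S, T⟩ := ST
    rw [← mul_one c, ← smul_single', map_smul, map_smul, map_smul, map_smul,
      Ahalf_anticomm_single u t, smul_neg]

lemma exists_Ahalf_single_eq_zero (S T : Finset ℕ+) :
    ∃ N, ∀ t, N ≤ t → Ahalf t (single (S, T) 1) = 0 := by
  refine ⟨(T.sup PNat.val : ℕ) + 2, fun t ht => ?_⟩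
  obtain ⟨k, rfl⟩ : ∃ k : ℕ+, t = k + 1 :=
    ⟨⟨(t - 1).toNat, by omega⟩, by simp; omega⟩
  exact Ahalf_pos_of_not_mem fun hk => by have := le_sup (f := PNat.val) hk; omega

lemma embVac_eq_lmapDomain (w : Wedge) (q : ℤ) : embVac w q = lmapDomain ℂ ℂ (·, q) w := rfl

lemma Zplus_embVac (a q : ℤ) (w : Wedge) :
    Zplus a (embVac w q) = embVac (Ahalf (a - q) w) (q + 1) := by
  have hZ : ∀ u, Zplus a u = linearCombination ℂ
      (fun STp : (Finset ℕ+ × Finset ℕ+) × ℤ =>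
        embVac (Abasis ((a : ℚ) - STp.2 - 1 / 2) STp.1) (STp.2 + 1)) u :=
    fun u => (linearCombination_apply ℂ u).symm
  have hA : Ahalf (a - q) w = linearCombination ℂ (Abasis (((a - q : ℤ) : ℚ) - 1 / 2)) w := by
    rw [Ahalf, Aop, linearCombination_apply, lsum_apply]
    rfl
  rw [hZ, embVac_eq_lmapDomain, lmapDomain_apply, linearCombination_mapDomain, hA,
    embVac_eq_lmapDomain, apply_linearCombination]
  congr 2
  funext V
  simp [embVac_eq_lmapDomain]

lemma Zplus_Zplus_single (a b p : ℤ) (ST : Finset ℕ+ × Finset ℕ+) :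
    Zplus a (Zplus b (single (ST, p) 1)) =
      embVac (Ahalf (a - p - 1) (Ahalf (b - p) (single ST 1))) (p + 2) := by
  rw [← mapDomain_single (f := (·, p)), ← lmapDomain_apply ℂ ℂ, ← embVac_eq_lmapDomain,
    Zplus_embVac, Zplus_embVac, sub_add_eq_sub_sub, add_assoc]
  rfl

theorem statement13 (m n : ℤ) (S T : Finset ℕ+) (p : ℤ) (w : Vac)
    (hw : w = Finsupp.single ((S, T), p) 1) :
    {k : ℕ | Zplus (m - k) (Zplus (n + k) w) ≠ 0}.Finite ∧
    {k : ℕ | Zplus (n - k) (Zplus (m + k) w) ≠ 0}.Finite ∧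
    ∑ᶠ k : ℕ, Zplus (m - k) (Zplus (n + k) w) =
      ∑ᶠ k : ℕ, Zplus (n - k) (Zplus (m + k) w) := by
  subst hw
  set c := m + n - 2 * p - 1
  set g : ℤ → Vac := fun t => embVac (Ahalf (c - t) (Ahalf t (single (S, T) 1))) (p + 2)
  have hterm : ∀ a b : ℤ, a + b = m + n → ∀ k : ℕ,
      Zplus (a - k) (Zplus (b + k) (single ((S, T), p) 1)) = g (b - p + k) := by
    intro a b hab k
    rw [Zplus_Zplus_single, show a - k - p - 1 = c - (b - p + k) by omega,
      show b + k - p = b - p + k by ring]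
  have hg : ∀ t, g (c - t) = -g t := by
    intro t
    simp only [g, sub_sub_cancel, embVac_eq_lmapDomain]
    rw [Ahalf_anticomm, map_neg]
  obtain ⟨N, hN⟩ := exists_Ahalf_single_eq_zero S T
  have hgN : ∀ t, N ≤ t → g t = 0 := fun t ht => by
    simp only [g, hN t ht, map_zero, embVac_eq_lmapDomain]
  simp only [hterm m n rfl, hterm n m (add_comm n m)]
  exact ⟨finite_support_nat_add hgN _, finite_support_nat_add hgN _,
    finsum_nat_add_eq_of_antisymm hg hgN (by omega)⟩
end
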